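/- arXiv:1806.02716 — 3 statements merged into one kernel-verified Lean document; each statement's English description precedes it below -/
import Mathlib

section
/- For any two sets of finite perimeter E, F in ℝⁿ, the perimeters satisfy the submodularity inequality P(E ∩ F) + P(E ∪ F) ≤ P(E) + P(F). -/
open MeasureTheory ENNReal Set Filter Bornology Topology

noncomputable section

abbrev Euc (n : ℕ) := EuclideanSpace ℝ (Fin n)

variable {n : ℕ}

/-- Divergence of a vector field on `ℝⁿ`. -/
def diverg (ξ : Euc n → Euc n) (x : Euc n) : ℝ :=
  ∑ i, fderiv ℝ ξ x (EuclideanSpace.single i 1) i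

/-- Admissible test vector fields: `C¹`, compactly supported, bounded by one. -/
def testVF (n : ℕ) : Set (Euc n → Euc n) :=
  {ξ | ContDiff ℝ 1 ξ ∧ HasCompactSupport ξ ∧ ∀ x, ‖ξ x‖ ≤ 1}

/-- De Giorgi perimeter of a set in `ℝⁿ`. -/
def perimeter (E : Set (Euc n)) : ℝ≥0∞ :=
  ⨆ ξ ∈ testVF n, ENNReal.ofReal (∫ x in E, diverg ξ x)

/-- Total variation of a function on `ℝⁿ`. -/
def totalVariation (u : Euc n → ℝ) : ℝ≥0∞ :=
  ⨆ ξ ∈ testVF n, ENNReal.ofReal (∫ x, u x * diverg ξ x)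

/-- `E` is outward minimizing in `Ω`. -/
def OutwardMinimizing (Ω E : Set (Euc n)) : Prop :=
  ∀ F : Set (Euc n), MeasurableSet F → E ⊆ F → F ⊆ Ω → perimeter E ≤ perimeter F

/-- Distance to the topological boundary of `F`. -/
def bdist (F : Set (Euc n)) (x : Euc n) : ℝ := Metric.infDist x (frontier F)

/-- Signed distance to the boundary of `F`: negative inside `F`, positive outside. -/
def sdist (F : Set (Euc n)) (x : Euc n) : ℝ :=
  haveI := Classical.dec (x ∈ F)
  if x ∈ F then -(bdist F x) else bdist F x

/-- The Almgren–Taylor–Wang functional `F_h(E, F) = P(E) + (1/h) ∫_{E Δ F} d_F`. -/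
def ATW (h : ℝ) (E F : Set (Euc n)) : ℝ≥0∞ :=
  perimeter E + ENNReal.ofReal (1 / h) * ∫⁻ x in symmDiff E F, ENNReal.ofReal (bdist F x)

/-!
Mollify the indicators: `u = φ ⋆ 𝟙_E` and `v = φ ⋆ 𝟙_F` are smooth with values in `[0, 1]`, and
`∫ u div η = ∫_E div (φ ⋆ η) ≤ P(E)` for every test field `η`, by Fubini and because divergence
commutes with convolution. For smooth `u, v` replace `min` and `max` by
`(u + v ∓ √((u - v)² + δ²)) / 2`. Integrating by parts twice,
`∫ min_δ div ξ + ∫ max_δ div ζ = ∫ u div η₁ + ∫ v div η₂` with `η₁ = w ξ + (1 - w) ζ` and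
`η₂ = w ζ + (1 - w) ξ`, which are again test fields because the weight `w = ∂ min_δ / ∂u` lies in
`[0, 1]`. Letting `δ → 0`, `∫ min(u, v) div ξ + ∫ max(u, v) div ζ ≤ P(E) + P(F)`; letting the
mollification radius go to `0`, `min(u, v) → 𝟙_{E ∩ F}` and `max(u, v) → 𝟙_{E ∪ F}` almost everywhere, so
`∫_{E ∩ F} div ξ + ∫_{E ∪ F} div ζ ≤ P(E) + P(F)` for all test fields `ξ, ζ`.
-/

open scoped Convolution
open ContinuousLinearMap (lsmul)

section

variable {E F : Type*} [NormedAddCommGroup E] [NormedSpace ℝ E] [FiniteDimensional ℝ E]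
  [MeasurableSpace E] [BorelSpace E] {μ : Measure E} [μ.IsAddHaarMeasure]
  [NormedAddCommGroup F] [NormedSpace ℝ F]

theorem integral_fderiv_eq_zero {w : E → F} (hw : ContDiff ℝ 1 w) (hws : HasCompactSupport w) :
    ∫ x, fderiv ℝ w x ∂μ = 0 := by
  have hDw : Continuous (fderiv ℝ w) := hw.continuous_fderiv one_ne_zero
  ext v
  rw [ContinuousLinearMap.integral_apply (hDw.integrable_of_hasCompactSupport (hws.fderiv ℝ)),
    zero_apply]
  simpa using integral_smul_fderiv_eq_neg_fderiv_smul_of_integrable (μ := μ) (v := v)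
    (f := fun _ => (1 : ℝ)) (g := w) (by simp) (by simpa using
      (hDw.clm_apply continuous_const).integrable_of_hasCompactSupport (hws.fderiv_apply ℝ v))
    (by simpa using hw.continuous.integrable_of_hasCompactSupport hws)
    (fun _ _ => differentiableAt_const _) (fun x _ => hw.differentiable one_ne_zero x)

end

section

variable {G E F : Type*} [NormedAddCommGroup E] [NormedSpace ℝ E] [NormedAddCommGroup F]
  [NormedSpace ℝ F]

theorem ContinuousLinearMap.map_lsmul_convolution [AddGroup G] [MeasurableSpace G]
    {μ : Measure G} [CompleteSpace E] [CompleteSpace F] (T : E →L[ℝ] F) {φ : G → ℝ} {g : G → E}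
    {x : G} (h : ConvolutionExistsAt φ g x (lsmul ℝ ℝ) μ) :
    T ((φ ⋆[lsmul ℝ ℝ, μ] g) x) = (φ ⋆[lsmul ℝ ℝ, μ] (T ∘ g)) x := by
  rw [convolution_def, convolution_def, ← T.integral_comp_comm h.integrable]
  simp only [lsmul_apply, map_smul, Function.comp_apply]

theorem lsmul_precompR : (lsmul ℝ ℝ : ℝ →L[ℝ] E →L[ℝ] E).precompR F = lsmul ℝ ℝ := by
  ext; rfl

theorem fderiv_lsmul_convolution [NormedAddCommGroup G] [NormedSpace ℝ G] [MeasurableSpace G]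
    [BorelSpace G] {μ : Measure G} [SFinite μ] [μ.IsAddLeftInvariant]
    {φ : G → ℝ} {g : G → E} (hφ : LocallyIntegrable φ μ) (hg : ContDiff ℝ 1 g)
    (hgs : HasCompactSupport g) (x : G) :
    fderiv ℝ (φ ⋆[lsmul ℝ ℝ, μ] g) x = (φ ⋆[lsmul ℝ ℝ, μ] fderiv ℝ g) x := by
  rw [(hgs.hasFDerivAt_convolution_right (lsmul ℝ ℝ) hφ hg x).fderiv, lsmul_precompR]

end

theorem integral_convolution_mul_eq_integral_mul_convolution {G : Type*} [AddCommGroup G]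
    [MeasurableSpace G] [MeasurableAdd₂ G] [MeasurableNeg G] {μ : Measure G} [SFinite μ]
    [μ.IsAddLeftInvariant] [μ.IsNegInvariant] {φ g ψ : G → ℝ} (hφ : Integrable φ μ)
    (hφ_neg : ∀ x, φ (-x) = φ x) (hg : AEStronglyMeasurable g μ) {C : ℝ} (hgC : ∀ x, |g x| ≤ C)
    (hψ : Integrable ψ μ) :
    ∫ x, (φ ⋆[lsmul ℝ ℝ, μ] g) x * ψ x ∂μ = ∫ x, g x * (φ ⋆[lsmul ℝ ℝ, μ] ψ) x ∂μ := by
  have hφ_sub (x t : G) : φ (t - x) = φ (x - t) := by rw [← neg_sub, hφ_neg]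
  have hK : Integrable (fun p : G × G => φ (p.1 - p.2) * ψ p.1) (μ.prod μ) := by
    simpa [Function.comp_def, hφ_sub, mul_comm] using
      (hψ.convolution_integrand (lsmul ℝ ℝ) hφ).swap
  have hH : Integrable (fun p : G × G => φ (p.1 - p.2) * g p.2 * ψ p.1) (μ.prod μ) := by
    refine (hK.norm.const_mul C).mono' ((hK.aestronglyMeasurable.mul hg.comp_snd).congr ?_) ?_
    · exact Eventually.of_forall fun p => by simp only [Pi.mul_apply]; ring
    · refine Eventually.of_forall fun p => ?_
      calc ‖φ (p.1 - p.2) * g p.2 * ψ p.1‖ = |g p.2| * ‖φ (p.1 - p.2) * ψ p.1‖ := by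
            simp only [norm_mul, Real.norm_eq_abs]; ring
        _ ≤ C * ‖φ (p.1 - p.2) * ψ p.1‖ := by gcongr; exact hgC _
  calc ∫ x, (φ ⋆[lsmul ℝ ℝ, μ] g) x * ψ x ∂μ = ∫ x, ∫ t, φ (x - t) * g t * ψ x ∂μ ∂μ := by
        refine integral_congr_ae (Eventually.of_forall fun x => ?_)
        dsimp only
        rw [convolution_lsmul_swap, ← integral_mul_const]
        rfl
    _ = ∫ t, ∫ x, φ (x - t) * g t * ψ x ∂μ ∂μ := integral_integral_swap hH
    _ = ∫ t, g t * (φ ⋆[lsmul ℝ ℝ, μ] ψ) t ∂μ := by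
        refine integral_congr_ae (Eventually.of_forall fun t => ?_)
        dsimp only
        rw [convolution_lsmul_swap, ← integral_const_mul]
        refine integral_congr_ae (Eventually.of_forall fun x => ?_)
        simp only [smul_eq_mul, hφ_sub t x]
        ring

section Integrals

variable {α : Type*} [MeasurableSpace α] {μ : Measure α}

theorem integral_indicator_one_mul {s : Set α} (hs : MeasurableSet s) (g : α → ℝ) :
    ∫ x, s.indicator 1 x * g x ∂μ = ∫ x in s, g x ∂μ := by
  simp_rw [← Set.indicator_mul_left, Pi.one_apply, one_mul]
  exact integral_indicator hs

theorem integral_mul_le_integral_mul_add {f f' g : α → ℝ} (hf : Integrable (fun x => f x * g x) μ)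
    (hf' : Integrable (fun x => f' x * g x) μ) (hg : Integrable g μ) {c : ℝ}
    (hc : ∀ x, |f x - f' x| ≤ c) :
    ∫ x, f x * g x ∂μ ≤ (∫ x, f' x * g x ∂μ) + c * ∫ x, |g x| ∂μ := by
  have hpt x : f x * g x ≤ f' x * g x + c * |g x| :=
    calc f x * g x = f' x * g x + (f x - f' x) * g x := by ring
      _ ≤ f' x * g x + |f x - f' x| * |g x| := by
          rw [← abs_mul]; linarith [le_abs_self ((f x - f' x) * g x)]
      _ ≤ f' x * g x + c * |g x| := by gcongr; exact hc x
  rw [← integral_const_mul, ← integral_add hf' (hg.abs.const_mul c)]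
  exact integral_mono hf (hf'.add (hg.abs.const_mul c)) hpt

theorem tendsto_integral_mul_of_ae_tendsto {ι : Type*} {l : Filter ι} [l.IsCountablyGenerated]
    {f : ι → α → ℝ} {f₀ g : α → ℝ} (hf : ∀ i, AEStronglyMeasurable (f i) μ)
    (hf_le : ∀ i x, |f i x| ≤ 1) (hlim : ∀ᵐ x ∂μ, Tendsto (fun i => f i x) l (𝓝 (f₀ x)))
    (hg : Integrable g μ) :
    Tendsto (fun i => ∫ x, f i x * g x ∂μ) l (𝓝 (∫ x, f₀ x * g x ∂μ)) :=
  tendsto_integral_filter_of_dominated_convergence (fun x => |g x|)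
    (Eventually.of_forall fun i => (hf i).mul hg.aestronglyMeasurable)
    (Eventually.of_forall fun i => Eventually.of_forall fun x => by
      simpa [abs_mul] using mul_le_of_le_one_left (abs_nonneg (g x)) (hf_le i x))
    hg.abs (hlim.mono fun x hx => hx.mul_const _)

end Integrals

theorem min_indicator_one {α M : Type*} [LinearOrder M] [Zero M] [One M] [ZeroLEOneClass M]
    (s t : Set α) (x : α) :
    min (s.indicator (1 : α → M) x) (t.indicator 1 x) = (s ∩ t).indicator 1 x := by
  by_cases hs : x ∈ s <;> by_cases ht : x ∈ t <;> simp [hs, ht]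

theorem max_indicator_one {α M : Type*} [LinearOrder M] [Zero M] [One M] [ZeroLEOneClass M]
    (s t : Set α) (x : α) :
    max (s.indicator (1 : α → M) x) (t.indicator 1 x) = (s ∪ t).indicator 1 x := by
  by_cases hs : x ∈ s <;> by_cases ht : x ∈ t <;> simp [hs, ht]

theorem ENNReal.ofReal_add_ofReal_le {a b c : ℝ} (hab : a + b ≤ c) (ha : a ≤ c) (hb : b ≤ c) :
    ENNReal.ofReal a + ENNReal.ofReal b ≤ ENNReal.ofReal c := by
  rcases le_total a 0 with ha0 | ha0 <;> rcases le_total b 0 with hb0 | hb0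
  · simp [ENNReal.ofReal_of_nonpos ha0, ENNReal.ofReal_of_nonpos hb0]
  · simpa [ENNReal.ofReal_of_nonpos ha0] using ENNReal.ofReal_le_ofReal hb
  · simpa [ENNReal.ofReal_of_nonpos hb0] using ENNReal.ofReal_le_ofReal ha
  · rw [← ENNReal.ofReal_add ha0 hb0]
    exact ENNReal.ofReal_le_ofReal hab

def smoothAbs (δ t : ℝ) : ℝ := √(t ^ 2 + δ ^ 2)

section SmoothAbs

variable {δ : ℝ}

theorem smoothAbs_pos (hδ : δ ≠ 0) (t : ℝ) : 0 < smoothAbs δ t :=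
  Real.sqrt_pos.2 (by positivity)

theorem abs_le_smoothAbs (δ t : ℝ) : |t| ≤ smoothAbs δ t := by
  rw [← Real.sqrt_sq_eq_abs]
  exact Real.sqrt_le_sqrt (by nlinarith)

theorem smoothAbs_le_abs_add_abs (δ t : ℝ) : smoothAbs δ t ≤ |t| + |δ| := by
  rw [← Real.sqrt_sq (by positivity : (0 : ℝ) ≤ |t| + |δ|)]
  exact Real.sqrt_le_sqrt (by nlinarith [abs_nonneg t, abs_nonneg δ, sq_abs t, sq_abs δ])

theorem contDiff_smoothAbs {k : WithTop ℕ∞} (hδ : δ ≠ 0) : ContDiff ℝ k (smoothAbs δ) :=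
  ((contDiff_id.pow 2).add contDiff_const).sqrt fun _ => by positivity

theorem hasDerivAt_smoothAbs (hδ : δ ≠ 0) (t : ℝ) :
    HasDerivAt (smoothAbs δ) (t / smoothAbs δ t) t := by
  have hpos : t ^ 2 + δ ^ 2 ≠ 0 := by positivity
  convert ((hasDerivAt_pow 2 t).add_const (δ ^ 2)).sqrt hpos using 1
  · rfl
  · norm_num [smoothAbs]
    ring

end SmoothAbs

def smoothMin (δ a b : ℝ) : ℝ := (a + b - smoothAbs δ (a - b)) / 2

def smoothMax (δ a b : ℝ) : ℝ := (a + b + smoothAbs δ (a - b)) / 2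

/-- The partial derivative of `smoothMin δ` in its first argument. -/
def smoothMinWeight (δ a b : ℝ) : ℝ := (1 - (a - b) / smoothAbs δ (a - b)) / 2

section SmoothMinMax

variable {δ : ℝ}

theorem abs_min_sub_smoothMin_le (δ a b : ℝ) : |min a b - smoothMin δ a b| ≤ |δ| / 2 := by
  have h₁ := abs_le_smoothAbs δ (a - b)
  have h₂ := smoothAbs_le_abs_add_abs δ (a - b)
  rw [smoothMin, abs_le]
  constructor <;> linarith [min_add_max a b, max_sub_min_eq_abs' a b]

theorem abs_max_sub_smoothMax_le (δ a b : ℝ) : |max a b - smoothMax δ a b| ≤ |δ| / 2 := by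
  have h₁ := abs_le_smoothAbs δ (a - b)
  have h₂ := smoothAbs_le_abs_add_abs δ (a - b)
  rw [smoothMax, abs_le]
  constructor <;> linarith [min_add_max a b, max_sub_min_eq_abs' a b]

theorem smoothMinWeight_mem_Icc (hδ : δ ≠ 0) (a b : ℝ) : smoothMinWeight δ a b ∈ Icc 0 1 := by
  have h := abs_le_smoothAbs δ (a - b)
  have hpos := smoothAbs_pos hδ (a - b)
  have : |(a - b) / smoothAbs δ (a - b)| ≤ 1 := by
    rwa [abs_div, abs_of_pos hpos, div_le_one hpos]
  rw [smoothMinWeight, mem_Icc]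
  constructor <;> linarith [abs_le.1 this]

variable {E : Type*} [NormedAddCommGroup E] [NormedSpace ℝ E] {u v : E → ℝ}

theorem ContDiff.smoothMin {k : WithTop ℕ∞} (hδ : δ ≠ 0) (hu : ContDiff ℝ k u)
    (hv : ContDiff ℝ k v) : ContDiff ℝ k fun y => smoothMin δ (u y) (v y) :=
  ((hu.add hv).sub ((contDiff_smoothAbs hδ).comp (hu.sub hv))).div_const 2

theorem ContDiff.smoothMax {k : WithTop ℕ∞} (hδ : δ ≠ 0) (hu : ContDiff ℝ k u)
    (hv : ContDiff ℝ k v) : ContDiff ℝ k fun y => smoothMax δ (u y) (v y) :=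
  ((hu.add hv).add ((contDiff_smoothAbs hδ).comp (hu.sub hv))).div_const 2

theorem ContDiff.smoothMinWeight {k : WithTop ℕ∞} (hδ : δ ≠ 0) (hu : ContDiff ℝ k u)
    (hv : ContDiff ℝ k v) : ContDiff ℝ k fun y => smoothMinWeight δ (u y) (v y) :=
  (contDiff_const.sub ((hu.sub hv).div ((contDiff_smoothAbs hδ).comp (hu.sub hv))
    fun _ => (smoothAbs_pos hδ _).ne')).div_const 2

variable {u' v' : E →L[ℝ] ℝ} {x : E}

theorem HasFDerivAt.smoothMin (hδ : δ ≠ 0) (hu : HasFDerivAt u u' x) (hv : HasFDerivAt v v' x) :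
    HasFDerivAt (fun y => smoothMin δ (u y) (v y))
      (smoothMinWeight δ (u x) (v x) • u' + (1 - smoothMinWeight δ (u x) (v x)) • v') x := by
  have hq := (hasDerivAt_smoothAbs hδ (u x - v x)).comp_hasFDerivAt x (hu.sub hv)
  refine ((((hu.add hv).sub hq).const_smul (2⁻¹ : ℝ)).congr_fderiv ?_).congr_of_eventuallyEq
    (Eventually.of_forall fun y => ?_)
  · ext w
    simp only [smoothMinWeight, add_apply, sub_apply, smul_apply, smul_eq_mul]
    ring
  · simp only [_root_.smoothMin, Pi.smul_apply, Pi.add_apply, Pi.sub_apply, Function.comp_apply,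
      smul_eq_mul]
    ring

theorem HasFDerivAt.smoothMax (hδ : δ ≠ 0) (hu : HasFDerivAt u u' x) (hv : HasFDerivAt v v' x) :
    HasFDerivAt (fun y => smoothMax δ (u y) (v y))
      ((1 - smoothMinWeight δ (u x) (v x)) • u' + smoothMinWeight δ (u x) (v x) • v') x := by
  have hq := (hasDerivAt_smoothAbs hδ (u x - v x)).comp_hasFDerivAt x (hu.sub hv)
  refine ((((hu.add hv).add hq).const_smul (2⁻¹ : ℝ)).congr_fderiv ?_).congr_of_eventuallyEq
    (Eventually.of_forall fun y => ?_)
  · ext w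
    simp only [smoothMinWeight, add_apply, sub_apply, smul_apply, smul_eq_mul]
    ring
  · simp only [_root_.smoothMax, Pi.smul_apply, Pi.add_apply, Pi.sub_apply, Function.comp_apply,
      smul_eq_mul]
    ring

end SmoothMinMax

def traceCLM (n : ℕ) : (Euc n →L[ℝ] Euc n) →L[ℝ] ℝ :=
  LinearMap.toContinuousLinearMap ((LinearMap.trace ℝ (Euc n)).comp (ContinuousLinearMap.coeLM ℝ))

theorem traceCLM_apply (A : Euc n →L[ℝ] Euc n) :
    traceCLM n A = ∑ i, A (EuclideanSpace.single i 1) i := by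
  simp [traceCLM, LinearMap.trace_eq_matrix_trace ℝ (EuclideanSpace.basisFun (Fin n) ℝ).toBasis,
    Matrix.trace, LinearMap.toMatrix_apply]

theorem diverg_eq_traceCLM_comp (ξ : Euc n → Euc n) : diverg ξ = traceCLM n ∘ fderiv ℝ ξ :=
  funext fun _ => (traceCLM_apply _).symm

theorem traceCLM_smulRight (L : Euc n →L[ℝ] ℝ) (y : Euc n) : traceCLM n (L.smulRight y) = L y :=
  LinearMap.trace_smulRight (L : Euc n →ₗ[ℝ] ℝ) y

@[simp] theorem diverg_zero : diverg (0 : Euc n → Euc n) = 0 := by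
  ext x
  simp [diverg]

theorem continuous_diverg {ξ : Euc n → Euc n} (hξ : ContDiff ℝ 1 ξ) : Continuous (diverg ξ) := by
  rw [diverg_eq_traceCLM_comp]
  exact (traceCLM n).continuous.comp (hξ.continuous_fderiv one_ne_zero)

theorem HasCompactSupport.diverg {ξ : Euc n → Euc n} (hξ : HasCompactSupport ξ) :
    HasCompactSupport (diverg ξ) := by
  rw [diverg_eq_traceCLM_comp]
  exact (hξ.fderiv ℝ).comp_left (map_zero _)

theorem integrable_diverg {ξ : Euc n → Euc n} (hξ : ContDiff ℝ 1 ξ) (hξs : HasCompactSupport ξ) :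
    Integrable (diverg ξ) :=
  (continuous_diverg hξ).integrable_of_hasCompactSupport hξs.diverg

theorem integral_diverg_eq_zero {w : Euc n → Euc n} (hw : ContDiff ℝ 1 w)
    (hws : HasCompactSupport w) : ∫ x, diverg w x = 0 := by
  rw [diverg_eq_traceCLM_comp]
  simp only [Function.comp_apply]
  rw [(traceCLM n).integral_comp_comm
    ((hw.continuous_fderiv one_ne_zero).integrable_of_hasCompactSupport (hws.fderiv ℝ)),
    integral_fderiv_eq_zero hw hws, map_zero]

theorem diverg_smul {f : Euc n → ℝ} {w : Euc n → Euc n} (hf : Differentiable ℝ f)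
    (hw : Differentiable ℝ w) (x : Euc n) :
    diverg (fun y => f y • w y) x = f x * diverg w x + fderiv ℝ f x (w x) := by
  simp only [diverg_eq_traceCLM_comp, Function.comp_apply, fderiv_fun_smul (hf x) (hw x), map_add,
    map_smul, traceCLM_smulRight, smul_eq_mul]

theorem integrable_mul_diverg {f : Euc n → ℝ} (hf : Continuous f) {ξ : Euc n → Euc n}
    (hξ : ContDiff ℝ 1 ξ) (hξs : HasCompactSupport ξ) : Integrable fun x => f x * diverg ξ x :=
  (hf.mul (continuous_diverg hξ)).integrable_of_hasCompactSupport hξs.diverg.mul_left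

theorem integrable_fderiv_apply {f : Euc n → ℝ} {w : Euc n → Euc n} (hf : ContDiff ℝ 1 f)
    (hw : Continuous w) (hws : HasCompactSupport w) :
    Integrable fun x => fderiv ℝ f x (w x) :=
  ((hf.continuous_fderiv one_ne_zero).clm_apply hw).integrable_of_hasCompactSupport
    (hws.mono fun x hx hwx => hx (by simp [hwx]))

theorem integral_mul_diverg {f : Euc n → ℝ} {w : Euc n → Euc n} (hf : ContDiff ℝ 1 f)
    (hw : ContDiff ℝ 1 w) (hws : HasCompactSupport w) :
    ∫ x, f x * diverg w x = -∫ x, fderiv ℝ f x (w x) := by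
  have hfws : HasCompactSupport fun y => f y • w y := hws.smul_left (f := f)
  have h : ∫ x, diverg (fun y => f y • w y) x = 0 := integral_diverg_eq_zero (hf.smul hw) hfws
  simp only [diverg_smul (hf.differentiable one_ne_zero) (hw.differentiable one_ne_zero)] at h
  rw [integral_add (integrable_mul_diverg hf.continuous hw hws)
    (integrable_fderiv_apply hf hw.continuous hws)] at h
  linarith

theorem diverg_convolution {φ : Euc n → ℝ} (hφ : LocallyIntegrable φ) {η : Euc n → Euc n}
    (hη : ContDiff ℝ 1 η) (hηs : HasCompactSupport η) (x : Euc n) :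
    diverg (φ ⋆ η) x = (φ ⋆ diverg η) x := by
  rw [diverg_eq_traceCLM_comp, diverg_eq_traceCLM_comp, Function.comp_apply,
    fderiv_lsmul_convolution hφ hη hηs, (traceCLM n).map_lsmul_convolution]
  exact (hηs.fderiv ℝ).convolutionExists_right _ hφ (hη.continuous_fderiv one_ne_zero) x

theorem zero_mem_testVF : (0 : Euc n → Euc n) ∈ testVF n :=
  ⟨contDiff_const, HasCompactSupport.zero, fun _ => by simp⟩

theorem smul_add_one_sub_smul_mem_testVF {c : Euc n → ℝ} (hc : ContDiff ℝ 1 c)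
    (hc0 : ∀ x, 0 ≤ c x) (hc1 : ∀ x, c x ≤ 1) {ξ ζ : Euc n → Euc n} (hξ : ξ ∈ testVF n)
    (hζ : ζ ∈ testVF n) : (fun x => c x • ξ x + (1 - c x) • ζ x) ∈ testVF n := by
  obtain ⟨hξ1, hξs, hξb⟩ := hξ
  obtain ⟨hζ1, hζs, hζb⟩ := hζ
  refine ⟨(hc.smul hξ1).add ((contDiff_const.sub hc).smul hζ1),
    (hξs.smul_left (f := c)).add (hζs.smul_left (f := fun x => 1 - c x)), fun x => ?_⟩
  simpa using convex_closedBall (0 : Euc n) 1 (by simpa using hξb x) (by simpa using hζb x)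
    (hc0 x) (sub_nonneg.2 (hc1 x)) (add_sub_cancel _ _)

theorem convolution_mem_testVF (φ : ContDiffBump (0 : Euc n)) {η : Euc n → Euc n}
    (hη : η ∈ testVF n) : φ.normed volume ⋆ η ∈ testVF n := by
  obtain ⟨hη1, hηs, hηb⟩ := hη
  refine ⟨φ.hasCompactSupport_normed.contDiff_convolution_left _ φ.contDiff_normed
    hη1.continuous.locallyIntegrable, φ.hasCompactSupport_normed.convolution _ hηs, fun x => ?_⟩
  rw [convolution_def]
  calc ‖∫ t, lsmul ℝ ℝ (φ.normed volume t) (η (x - t))‖ ≤ ∫ t, φ.normed volume t :=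
        norm_integral_le_of_norm_le φ.integrable_normed (Eventually.of_forall fun t => by
          simpa [norm_smul, abs_of_nonneg (φ.nonneg_normed t)] using
            mul_le_mul_of_nonneg_left (hηb (x - t)) (φ.nonneg_normed t))
    _ = 1 := φ.integral_normed

theorem setIntegral_diverg_le_toReal_perimeter {E : Set (Euc n)} (hE : perimeter E ≠ ⊤)
    {θ : Euc n → Euc n} (hθ : θ ∈ testVF n) : ∫ x in E, diverg θ x ≤ (perimeter E).toReal :=
  (ENNReal.ofReal_le_iff_le_toReal hE).1 <|
    le_biSup (fun ξ => ENNReal.ofReal (∫ x in E, diverg ξ x)) hθ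

section Mollification

def mollify (φ : ContDiffBump (0 : Euc n)) (E : Set (Euc n)) : Euc n → ℝ :=
  φ.normed volume ⋆ E.indicator 1

variable (φ : ContDiffBump (0 : Euc n)) {E : Set (Euc n)}

theorem contDiff_mollify (hE : MeasurableSet E) : ContDiff ℝ 1 (mollify φ E) :=
  φ.hasCompactSupport_normed.contDiff_convolution_left _ φ.contDiff_normed
    ((locallyIntegrable_const 1).indicator hE)

theorem abs_mollify_le_one (x : Euc n) : |mollify φ E x| ≤ 1 := by
  have h0 : 0 ≤ mollify φ E x := integral_nonneg fun t =>
    mul_nonneg (φ.nonneg_normed t) (Set.indicator_nonneg (fun _ _ => zero_le_one) _)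
  have h1 : (φ.normed volume ⋆ (1 : Euc n → ℝ)) x = 1 := by
    simpa [convolution_def] using φ.integral_normed_smul (μ := volume) (1 : ℝ)
  rw [abs_of_nonneg h0, ← h1]
  exact convolution_mono_right_of_nonneg
    ((φ.hasCompactSupport_normed.convolutionExists_left _ φ.continuous_normed
      (locallyIntegrable_const 1)) x) φ.nonneg_normed
    (Set.indicator_le_self' fun _ _ => zero_le_one) fun _ => zero_le_one

theorem integral_mollify_mul_diverg_le (hE : MeasurableSet E) (hPE : perimeter E ≠ ⊤)
    {η : Euc n → Euc n} (hη : η ∈ testVF n) :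
    ∫ x, mollify φ E x * diverg η x ≤ (perimeter E).toReal := by
  rw [mollify, integral_convolution_mul_eq_integral_mul_convolution φ.integrable_normed
    φ.normed_neg ((measurable_one.indicator hE).aestronglyMeasurable) (C := 1)
    (fun x => by by_cases hx : x ∈ E <;> simp [hx]) (integrable_diverg hη.1 hη.2.1),
    integral_indicator_one_mul hE]
  simp_rw [← diverg_convolution φ.integrable_normed.locallyIntegrable hη.1 hη.2.1]
  exact setIntegral_diverg_le_toReal_perimeter hPE (convolution_mem_testVF φ hη)

end Mollification

def mollifierBump (n k : ℕ) : ContDiffBump (0 : Euc n) where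
  rIn := ((k : ℝ) + 1)⁻¹
  rOut := 2 * ((k : ℝ) + 1)⁻¹
  rIn_pos := by positivity
  rIn_lt_rOut := lt_two_mul_self (by positivity)

theorem ae_tendsto_mollify {E : Set (Euc n)} (hE : MeasurableSet E) :
    ∀ᵐ x, Tendsto (fun k => mollify (mollifierBump n k) E x) atTop (𝓝 (E.indicator 1 x)) := by
  refine ContDiffBump.ae_convolution_tendsto_right_of_locallyIntegrable (K := 2) ?_
    (Eventually.of_forall fun k => le_rfl) ((locallyIntegrable_const 1).indicator hE)
  simpa [mollifierBump, one_div] using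
    (tendsto_one_div_add_atTop_nhds_zero_nat (𝕜 := ℝ)).const_mul (2 : ℝ)

theorem exists_testVF_integral_smoothMin_add_smoothMax {u v : Euc n → ℝ} (hu : ContDiff ℝ 1 u)
    (hv : ContDiff ℝ 1 v) {δ : ℝ} (hδ : δ ≠ 0) {ξ ζ : Euc n → Euc n} (hξ : ξ ∈ testVF n)
    (hζ : ζ ∈ testVF n) :
    ∃ η₁ ∈ testVF n, ∃ η₂ ∈ testVF n,
      (∫ x, smoothMin δ (u x) (v x) * diverg ξ x) + ∫ x, smoothMax δ (u x) (v x) * diverg ζ x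
        = (∫ x, u x * diverg η₁ x) + ∫ x, v x * diverg η₂ x := by
  set w := fun x => smoothMinWeight δ (u x) (v x)
  have hw := hu.smoothMinWeight hδ hv
  have hw0 x : 0 ≤ w x := (smoothMinWeight_mem_Icc hδ _ _).1
  have hw1 x : w x ≤ 1 := (smoothMinWeight_mem_Icc hδ _ _).2
  have hη₁ := smul_add_one_sub_smul_mem_testVF hw hw0 hw1 hξ hζ
  have hη₂ := smul_add_one_sub_smul_mem_testVF hw hw0 hw1 hζ hξ
  refine ⟨_, hη₁, _, hη₂, ?_⟩
  have hmin := hu.smoothMin hδ hv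
  have hmax := hu.smoothMax hδ hv
  rw [integral_mul_diverg hmin hξ.1 hξ.2.1, integral_mul_diverg hmax hζ.1 hζ.2.1,
    integral_mul_diverg hu hη₁.1 hη₁.2.1, integral_mul_diverg hv hη₂.1 hη₂.2.1, ← neg_add,
    ← neg_add, ← integral_add (integrable_fderiv_apply hmin hξ.1.continuous hξ.2.1)
      (integrable_fderiv_apply hmax hζ.1.continuous hζ.2.1),
    ← integral_add (integrable_fderiv_apply hu hη₁.1.continuous hη₁.2.1)
      (integrable_fderiv_apply hv hη₂.1.continuous hη₂.2.1)]
  congr 1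
  refine integral_congr_ae (Eventually.of_forall fun x => ?_)
  have hux := (hu.differentiable one_ne_zero x).hasFDerivAt
  have hvx := (hv.differentiable one_ne_zero x).hasFDerivAt
  simp only [(hux.smoothMin hδ hvx).fderiv, (hux.smoothMax hδ hvx).fderiv, add_apply, smul_apply,
    map_add, map_smul, smul_eq_mul]
  ring

theorem integral_min_mul_diverg_add_integral_max_mul_diverg_le {u v : Euc n → ℝ}
    (hu : ContDiff ℝ 1 u) (hv : ContDiff ℝ 1 v) {A B : ℝ}
    (hA : ∀ η ∈ testVF n, ∫ x, u x * diverg η x ≤ A)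
    (hB : ∀ η ∈ testVF n, ∫ x, v x * diverg η x ≤ B) {ξ ζ : Euc n → Euc n}
    (hξ : ξ ∈ testVF n) (hζ : ζ ∈ testVF n) :
    (∫ x, min (u x) (v x) * diverg ξ x) + ∫ x, max (u x) (v x) * diverg ζ x ≤ A + B := by
  set C := ((∫ x, |diverg ξ x|) + ∫ x, |diverg ζ x|) / 2
  have key : ∀ δ > 0, (∫ x, min (u x) (v x) * diverg ξ x) + ∫ x, max (u x) (v x) * diverg ζ x
      ≤ A + B + δ * C := by
    intro δ hδ
    obtain ⟨η₁, hη₁, η₂, hη₂, h⟩ :=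
      exists_testVF_integral_smoothMin_add_smoothMax hu hv hδ.ne' hξ hζ
    have hmin := integral_mul_le_integral_mul_add
      (integrable_mul_diverg (hu.continuous.min hv.continuous) hξ.1 hξ.2.1)
      (integrable_mul_diverg (hu.smoothMin hδ.ne' hv).continuous hξ.1 hξ.2.1)
      (integrable_diverg hξ.1 hξ.2.1) (c := δ / 2)
      (fun x => by simpa [abs_of_pos hδ] using abs_min_sub_smoothMin_le δ (u x) (v x))
    have hmax := integral_mul_le_integral_mul_add
      (integrable_mul_diverg (hu.continuous.max hv.continuous) hζ.1 hζ.2.1)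
      (integrable_mul_diverg (hu.smoothMax hδ.ne' hv).continuous hζ.1 hζ.2.1)
      (integrable_diverg hζ.1 hζ.2.1) (c := δ / 2)
      (fun x => by simpa [abs_of_pos hδ] using abs_max_sub_smoothMax_le δ (u x) (v x))
    have hC : δ * C = δ / 2 * (∫ x, |diverg ξ x|) + δ / 2 * ∫ x, |diverg ζ x| := by ring
    linarith [hA η₁ hη₁, hB η₂ hη₂]
  have hlim : Tendsto (fun δ => A + B + δ * C) (𝓝[>] 0) (𝓝 (A + B)) := by
    have hcont : Continuous fun δ : ℝ => A + B + δ * C := by fun_prop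
    exact (hcont.tendsto' 0 _ (by simp)).mono_left nhdsWithin_le_nhds
  exact ge_of_tendsto hlim (eventually_nhdsWithin_of_forall key)

theorem setIntegral_inter_add_setIntegral_union_le {E F : Set (Euc n)} (hE : MeasurableSet E)
    (hF : MeasurableSet F) (hPE : perimeter E ≠ ⊤) (hPF : perimeter F ≠ ⊤)
    {ξ ζ : Euc n → Euc n} (hξ : ξ ∈ testVF n) (hζ : ζ ∈ testVF n) :
    (∫ x in E ∩ F, diverg ξ x) + ∫ x in E ∪ F, diverg ζ x
      ≤ (perimeter E).toReal + (perimeter F).toReal := by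
  set u := fun k => mollify (mollifierBump n k) E
  set v := fun k => mollify (mollifierBump n k) F
  have hu k : ContDiff ℝ 1 (u k) := contDiff_mollify _ hE
  have hv k : ContDiff ℝ 1 (v k) := contDiff_mollify _ hF
  have hmin : Tendsto (fun k => ∫ x, min (u k x) (v k x) * diverg ξ x) atTop
      (𝓝 (∫ x in E ∩ F, diverg ξ x)) := by
    rw [← integral_indicator_one_mul (hE.inter hF)]
    refine tendsto_integral_mul_of_ae_tendsto
      (fun k => ((hu k).continuous.min (hv k).continuous).aestronglyMeasurable)
      (fun k x => abs_min_le_max_abs_abs.trans (max_le (abs_mollify_le_one _ x)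
        (abs_mollify_le_one _ x))) ?_ (integrable_diverg hξ.1 hξ.2.1)
    filter_upwards [ae_tendsto_mollify hE, ae_tendsto_mollify hF] with x hxE hxF
    simpa only [min_indicator_one] using hxE.min hxF
  have hmax : Tendsto (fun k => ∫ x, max (u k x) (v k x) * diverg ζ x) atTop
      (𝓝 (∫ x in E ∪ F, diverg ζ x)) := by
    rw [← integral_indicator_one_mul (hE.union hF)]
    refine tendsto_integral_mul_of_ae_tendsto
      (fun k => ((hu k).continuous.max (hv k).continuous).aestronglyMeasurable)
      (fun k x => abs_max_le_max_abs_abs.trans (max_le (abs_mollify_le_one _ x)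
        (abs_mollify_le_one _ x))) ?_ (integrable_diverg hζ.1 hζ.2.1)
    filter_upwards [ae_tendsto_mollify hE, ae_tendsto_mollify hF] with x hxE hxF
    simpa only [max_indicator_one] using hxE.max hxF
  refine le_of_tendsto' (hmin.add hmax) fun k => ?_
  exact integral_min_mul_diverg_add_integral_max_mul_diverg_le (hu k) (hv k)
    (fun η hη => integral_mollify_mul_diverg_le _ hE hPE hη)
    (fun η hη => integral_mollify_mul_diverg_le _ hF hPF hη) hξ hζ

theorem perimeter_submodular_general (E F : Set (Euc n))
    (hE : MeasurableSet E) (hF : MeasurableSet F) :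
    perimeter (E ∩ F) + perimeter (E ∪ F) ≤ perimeter E + perimeter F := by
  rcases eq_or_ne (perimeter E) ⊤ with hPE | hPE
  · simp [hPE]
  rcases eq_or_ne (perimeter F) ⊤ with hPF | hPF
  · simp [hPF]
  have key := fun ξ (hξ : ξ ∈ testVF n) ζ (hζ : ζ ∈ testVF n) =>
    setIntegral_inter_add_setIntegral_union_le hE hF hPE hPF hξ hζ
  rw [← ENNReal.ofReal_toReal hPE, ← ENNReal.ofReal_toReal hPF,
    ← ENNReal.ofReal_add ENNReal.toReal_nonneg ENNReal.toReal_nonneg]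
  refine ENNReal.biSup_add_biSup_le ⟨0, zero_mem_testVF⟩ ⟨0, zero_mem_testVF⟩ fun ξ hξ ζ hζ => ?_
  exact ENNReal.ofReal_add_ofReal_le (key ξ hξ ζ hζ)
    (by simpa using key ξ hξ 0 zero_mem_testVF) (by simpa using key 0 zero_mem_testVF ζ hζ)

/-- Submodularity of the De Giorgi perimeter:
`P(E ∩ F) + P(E ∪ F) ≤ P(E) + P(F)` for sets of finite perimeter. -/
theorem perimeter_submodular (E F : Set (Euc n))
    (hE : MeasurableSet E) (hF : MeasurableSet F)
    (hEfin : perimeter E < ⊤) (hFfin : perimeter F < ⊤) :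
    perimeter (E ∩ F) + perimeter (E ∪ F) ≤ perimeter E + perimeter F :=
  perimeter_submodular_general E F hE hF
end
end

section
/- Suppose the sets E_k of the ATW scheme are nested (E_k ⊂ E_{k−1} for all k ≥ 1) and satisfy the distance estimate dist(z, ∂E_{k−1}) ≥ h·H₀ for all z ∈ ∂E_k and all k ≥ 1, for some constant H₀ > 0. Then the arrival time u_h(x) = h Σ_{k≥0} χ_{E_k}(x) satisfies the approximate Lipschitz estimate |u_h(x) − u_h(y)| ≤ |x−y|/H₀ + h for all x, y ∈ ℝⁿ. -/
open MeasureTheory ENNReal Set Filter Bornology Topology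

noncomputable section

variable {n : ℕ}

/-- A preconnected set meeting both `t` and its complement meets `frontier t`. -/
lemma isPreconnected_inter_frontier_nonempty' {X : Type*} [TopologicalSpace X]
    {s t : Set X} (hs : IsPreconnected s) (h1 : (s ∩ t).Nonempty)
    (h2 : (s \ t).Nonempty) : (s ∩ frontier t).Nonempty := by
  by_contra hne
  rw [Set.not_nonempty_iff_eq_empty] at hne
  have hsub : s ⊆ interior t ∪ interior tᶜ := by
    intro x hx
    have hxf : x ∉ frontier t := fun hf => (Set.eq_empty_iff_forall_notMem.1 hne x) ⟨hx, hf⟩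
    by_cases hxc : x ∈ closure t
    · left
      by_contra hxi
      exact hxf ⟨hxc, hxi⟩
    · right
      rwa [interior_compl, Set.mem_compl_iff]
  obtain ⟨x₁, hx₁s, hx₁t⟩ := h1
  obtain ⟨x₂, hx₂s, hx₂t⟩ := h2
  have hx₁ : x₁ ∈ interior t := by
    rcases hsub hx₁s with h | h
    · exact h
    · exact absurd hx₁t (interior_subset h)
  have hx₂ : x₂ ∈ interior tᶜ := by
    rcases hsub hx₂s with h | h
    · exact absurd (interior_subset h) hx₂t
    · exact h
  obtain ⟨z, hzs, hz1, hz2⟩ := hs (interior t) (interior tᶜ) isOpen_interior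
    isOpen_interior hsub ⟨x₁, hx₁s, hx₁⟩ ⟨x₂, hx₂s, hx₂⟩
  exact interior_subset hz2 (interior_subset hz1)

/-- Key separation estimate: if `x ∈ E (k+m)` and `y ∉ E k`, consecutive boundaries
being at distance `≥ h·H₀` forces `dist x y ≥ m·h·H₀`. -/
lemma key_dist_estimate (h H₀ : ℝ) (hh : 0 < h) (hH : 0 < H₀)
    (E : ℕ → Set (Euc n)) (hopen : ∀ k, IsOpen (E k))
    (hnested : ∀ k, E (k + 1) ⊆ E k)
    (hdist : ∀ k, ∀ z ∈ frontier (E (k + 1)),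
      h * H₀ ≤ Metric.infDist z (frontier (E k))) :
    ∀ m k : ℕ, ∀ x y : Euc n, x ∈ E (k + m) → y ∉ E k →
      (m : ℝ) * (h * H₀) ≤ dist x y := by
  have hanti : Antitone E := antitone_nat_of_succ_le hnested
  intro m
  induction m with
  | zero => intro k x y _ _; simpa using dist_nonneg
  | succ m ih =>
    intro k x y hx hy
    have hx1 : x ∈ E (k + 1) := hanti (by omega) hx
    have hy1 : y ∉ E (k + 1) := fun hy' => hy (hnested k hy')
    -- the segment [x,y] crosses the frontier of E (k+1) at some z
    obtain ⟨z, hzseg, hzfr⟩ := isPreconnected_inter_frontier_nonempty'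
      (convex_segment x y).isPreconnected
      ⟨x, left_mem_segment ℝ x y, hx1⟩ ⟨y, right_mem_segment ℝ x y, hy1⟩
    have hdxy : dist x z + dist z y = dist x y := dist_add_dist_of_mem_segment hzseg
    have hz_not : z ∉ E (k + 1) := by
      rw [(hopen (k + 1)).frontier_eq] at hzfr
      exact hzfr.2
    have hIH : (m : ℝ) * (h * H₀) ≤ dist x z := by
      apply ih (k + 1) x z _ hz_not
      have : k + 1 + m = k + (m + 1) := by omega
      rw [this]; exact hx
    have hinf : h * H₀ ≤ Metric.infDist z (frontier (E k)) := hdist k z hzfr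
    have hzy : h * H₀ ≤ dist z y := by
      by_cases hyc : y ∈ closure (E k)
      · have hyfr : y ∈ frontier (E k) := by
          rw [(hopen k).frontier_eq]
          exact ⟨hyc, hy⟩
        exact hinf.trans (Metric.infDist_le_dist_of_mem hyfr)
      · have hzc : z ∈ closure (E k) :=
          closure_mono (hnested k) (frontier_subset_closure hzfr)
        obtain ⟨w, hwseg, hwfr⟩ := isPreconnected_inter_frontier_nonempty'
          (convex_segment z y).isPreconnected
          ⟨z, left_mem_segment ℝ z y, hzc⟩ ⟨y, right_mem_segment ℝ z y, hyc⟩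
        have hwfr' : w ∈ frontier (E k) := frontier_closure_subset hwfr
        have h1 : h * H₀ ≤ dist z w := hinf.trans (Metric.infDist_le_dist_of_mem hwfr')
        have h2 : dist z w + dist w y = dist z y := dist_add_dist_of_mem_segment hwseg
        have := dist_nonneg (x := w) (y := y)
        linarith
    push_cast
    nlinarith [dist_nonneg (x := x) (y := z)]

/-- If the ATW sets are nested and the boundaries of consecutive sets are at
distance at least `h·H₀`, then the arrival time is Lipschitz with constant
`1/H₀` up to an additive error `h`. -/
theorem arrivalTime_lipschitz (h H₀ : ℝ) (hh : 0 < h) (hH : 0 < H₀)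
    (E : ℕ → Set (Euc n)) (hopen : ∀ k, IsOpen (E k)) (hb : IsBounded (E 0))
    (hnested : ∀ k, E (k + 1) ⊆ E k) (hext : ∃ N, ∀ k ≥ N, E k = ∅)
    (hdist : ∀ k, ∀ z ∈ frontier (E (k + 1)),
      h * H₀ ≤ Metric.infDist z (frontier (E k))) :
    ∀ x y : Euc n,
      |(h * ∑' k, (E k).indicator (fun _ => (1 : ℝ)) x) -
        (h * ∑' k, (E k).indicator (fun _ => (1 : ℝ)) y)| ≤
      dist x y / H₀ + h := by
  classical
  obtain ⟨N, hN⟩ := hext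
  have hanti : Antitone E := antitone_nat_of_succ_le hnested
  have hex : ∀ x : Euc n, ∃ k, x ∉ E k := fun x => ⟨N, by simp [hN N le_rfl]⟩
  set M : Euc n → ℕ := fun x => Nat.find (hex x) with hM
  have hsum : ∀ x : Euc n, ∑' k, (E k).indicator (fun _ => (1 : ℝ)) x = M x := by
    intro x
    have h0 : ∀ k ∉ Finset.range (M x), (E k).indicator (fun _ => (1 : ℝ)) x = 0 := by
      intro k hk
      rw [Finset.mem_range, not_lt] at hk
      have hxk : x ∉ E k := fun hxk => Nat.find_spec (hex x) (hanti hk hxk)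
      simp [Set.indicator_of_notMem hxk]
    rw [tsum_eq_sum h0]
    have h1 : ∀ k ∈ Finset.range (M x), (E k).indicator (fun _ => (1 : ℝ)) x = 1 := by
      intro k hk
      rw [Finset.mem_range] at hk
      have hxk : x ∈ E k := by
        by_contra hxk
        exact Nat.find_min (hex x) hk hxk
      simp [Set.indicator_of_mem hxk]
    rw [Finset.sum_congr rfl h1]
    simp
  have main : ∀ a b : Euc n,
      h * (M a : ℝ) - h * (M b : ℝ) ≤ dist a b / H₀ + h := by
    intro a b
    by_cases hle : M a ≤ M b
    · have : h * (M a : ℝ) - h * (M b : ℝ) ≤ 0 := by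
        have : (M a : ℝ) ≤ (M b : ℝ) := by exact_mod_cast hle
        nlinarith
      have hd : 0 ≤ dist a b / H₀ := div_nonneg dist_nonneg hH.le
      linarith
    · push_neg at hle
      set m : ℕ := M a - 1 - M b with hm
      have hxmem : a ∈ E (M b + m) := by
        by_contra hxm
        have := Nat.find_min (hex a) (show M b + m < M a by omega) hxm
        exact this
      have hymem : b ∉ E (M b) := Nat.find_spec (hex b)
      have hkey : (m : ℝ) * (h * H₀) ≤ dist a b :=
        key_dist_estimate h H₀ hh hH E hopen hnested hdist m (M b) a b hxmem hymem
      have hcast : (M a : ℝ) = (M b : ℝ) + (m : ℝ) + 1 := by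
        have : M a = M b + m + 1 := by omega
        rw [this]; push_cast; ring
      have hdiv : (m : ℝ) * h ≤ dist a b / H₀ := by
        rw [le_div_iff₀ hH]
        nlinarith
      rw [hcast]
      nlinarith
  intro x y
  rw [hsum x, hsum y, abs_sub_le_iff]
  constructor
  · exact main x y
  · have := main y x
    rwa [dist_comm] at this


end
end

section
/- Let E₀ ⊂⊂ F₀ be bounded open sets in ℝⁿ with nonempty boundaries such that dist(x, ∂F₀) > 0 for all x ∈ ∂E₀. Then the signed distance functions satisfy the strict inequality sd_{F₀}(x) < sd_{E₀}(x) for all x ∈ ℝⁿ. -/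
open MeasureTheory ENNReal Set Filter Bornology Topology

noncomputable section

variable {n : ℕ}

lemma seg_cross {α : Type*} [TopologicalSpace α] {E s : Set α} (hs : IsPreconnected s)
    {x z : α} (hx : x ∈ s) (hxE : x ∈ interior E) (hz : z ∈ s) (hzE : z ∉ closure E) :
    (s ∩ frontier E).Nonempty := by
  by_contra h
  have hsub : s ⊆ interior E ∪ (closure E)ᶜ := by
    intro y hy
    rcases Classical.em (y ∈ closure E) with hyc | hyc
    · left
      rw [closure_eq_interior_union_frontier] at hyc
      rcases hyc with h1 | h1
      · exact h1
      · exact absurd ⟨y, hy, h1⟩ h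
    · right; exact hyc
  have := hs (interior E) (closure E)ᶜ isOpen_interior isClosed_closure.isOpen_compl hsub
    ⟨x, hx, hxE⟩ ⟨z, hz, hzE⟩
  obtain ⟨y, _, hy1, hy2⟩ := this
  exact hy2 (subset_closure (interior_subset hy1))

/-- If `E₀ ⊂⊂ F₀` with boundaries at positive distance, then the signed
distance functions satisfy `sd_{F₀} < sd_{E₀}` everywhere. -/
theorem sdist_strict_lt (n : ℕ) (hn : 1 ≤ n) (E₀ F₀ : Set (Euc n))
    (hE₀o : IsOpen E₀) (hF₀o : IsOpen F₀)
    (hE₀b : IsBounded E₀) (hF₀b : IsBounded F₀)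
    (hE₀ne : E₀.Nonempty) (hF₀ne : F₀.Nonempty)
    (hcc : closure E₀ ⊆ F₀)
    (hpos : ∀ x ∈ frontier E₀, 0 < Metric.infDist x (frontier F₀)) :
    ∀ x : Euc n, sdist F₀ x < sdist E₀ x := by
  haveI : Nonempty (Fin n) := ⟨⟨0, hn⟩⟩
  have hEsub : E₀ ⊆ F₀ := subset_closure.trans hcc
  have hEneU : E₀ ≠ univ := fun h => NormedSpace.unbounded_univ ℝ (Euc n) (h ▸ hE₀b)
  have hFneU : F₀ ≠ univ := fun h => NormedSpace.unbounded_univ ℝ (Euc n) (h ▸ hF₀b)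
  have hfE : (frontier E₀).Nonempty := nonempty_frontier_iff.mpr ⟨hE₀ne, hEneU⟩
  have hfF : (frontier F₀).Nonempty := nonempty_frontier_iff.mpr ⟨hF₀ne, hFneU⟩
  -- the frontier of `E₀` is compact
  have hKE : IsCompact (frontier E₀) :=
    Metric.isCompact_of_isClosed_isBounded isClosed_frontier
      (hE₀b.closure.subset frontier_subset_closure)
  -- minimum of `infDist · (frontier F₀)` over `frontier E₀`
  obtain ⟨y₀, hy₀, hy₀min⟩ := hKE.exists_isMinOn hfE
    ((Metric.continuous_infDist_pt (frontier F₀)).continuousOn)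
  set ε : ℝ := Metric.infDist y₀ (frontier F₀) with hε
  have hεpos : 0 < ε := hpos y₀ hy₀
  have hεle : ∀ y ∈ frontier E₀, ε ≤ Metric.infDist y (frontier F₀) := fun y hy => hy₀min hy
  -- frontier points of `F₀` are outside `closure E₀`
  have hfF_not : ∀ z ∈ frontier F₀, z ∉ closure E₀ := by
    intro z hz hzc
    have : z ∉ F₀ := by
      rw [hF₀o.frontier_eq] at hz; exact hz.2
    exact this (hcc hzc)
  intro x
  rcases Classical.em (x ∈ E₀) with hxE | hxE
  · -- Case A : `x ∈ E₀ ⊆ F₀`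
    have hxF : x ∈ F₀ := hEsub hxE
    have key : Metric.infDist x (frontier E₀) + ε ≤ Metric.infDist x (frontier F₀) := by
      rw [← not_lt, Metric.infDist_lt_iff hfF]; push_neg
      intro z hz
      obtain ⟨y, hyseg, hyfr⟩ := seg_cross (convex_segment x z).isPreconnected
        (left_mem_segment ℝ x z) (by rwa [hE₀o.interior_eq]) (right_mem_segment ℝ x z)
        (hfF_not z hz)
      have h1 : dist x y + dist y z = dist x z := dist_add_dist_of_mem_segment hyseg
      have h2 : Metric.infDist x (frontier E₀) ≤ dist x y :=
        Metric.infDist_le_dist_of_mem hyfr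
      have h3 : ε ≤ dist y z :=
        (hεle y hyfr).trans (Metric.infDist_le_dist_of_mem hz)
      linarith
    simp only [sdist, bdist, if_pos hxE, if_pos hxF]
    linarith
  rcases Classical.em (x ∈ F₀) with hxF | hxF
  · -- Case C : `x ∈ F₀ \\ E₀`
    have hx1 : x ∉ frontier F₀ := by rw [hF₀o.frontier_eq]; exact fun h => h.2 hxF
    have h2 : 0 < Metric.infDist x (frontier F₀) :=
      (isClosed_frontier.notMem_iff_infDist_pos hfF).mp hx1
    have h3 : 0 ≤ Metric.infDist x (frontier E₀) := Metric.infDist_nonneg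
    simp only [sdist, bdist, if_neg hxE, if_pos hxF]
    linarith
  · -- Case B : `x ∉ F₀`
    have key : Metric.infDist x (frontier F₀) + ε ≤ Metric.infDist x (frontier E₀) := by
      rw [← not_lt, Metric.infDist_lt_iff hfE]; push_neg
      intro y hy
      have hyF : y ∈ F₀ := hcc (frontier_subset_closure hy)
      rcases Classical.em (x ∈ closure F₀) with hxc | hxc
      · have hxfr : x ∈ frontier F₀ := ⟨hxc, by rwa [hF₀o.interior_eq]⟩
        have h1 : Metric.infDist x (frontier F₀) = 0 := Metric.infDist_zero_of_mem hxfr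
        have h2 : ε ≤ dist y x := (hεle y hy).trans (Metric.infDist_le_dist_of_mem hxfr)
        rw [h1]; rw [dist_comm] at h2; linarith
      · obtain ⟨z, hzseg, hzfr⟩ := seg_cross (convex_segment y x).isPreconnected
          (left_mem_segment ℝ y x) (by rwa [hF₀o.interior_eq]) (right_mem_segment ℝ y x) hxc
        have h1 : dist y z + dist z x = dist y x := dist_add_dist_of_mem_segment hzseg
        have h2 : Metric.infDist x (frontier F₀) ≤ dist x z :=
          Metric.infDist_le_dist_of_mem hzfr
        have h3 : ε ≤ dist y z :=
          (hεle y hy).trans (Metric.infDist_le_dist_of_mem hzfr)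
        rw [dist_comm x y, ← h1, dist_comm z x]
        linarith
    simp only [sdist, bdist, if_neg hxE, if_neg hxF]
    linarith

end
end
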